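/- Let ψ : ℝ^M → ℂ^D be a differentiable family of unit vectors, fix θ* ∈ ℝ^M, let 0 < t ≤ 1, and set K = (t − 1)·ψ(θ*)ψ(θ*)† + I, F = K†K, p(θ) = ⟨ψ(θ), F ψ(θ)⟩, ψ^{ps}(θ) = K ψ(θ)/√(p(θ)). Then the distillation is lossless: for all i, j, p(θ*) · 𝓘_{ij}(θ* | ψ^{ps}) = 𝓘_{ij}(θ* | ψ), i.e., the postselection probability times the postselected QFIM equals the original QFIM. Moreover, viewing the QFIM as an M×M real matrix, 𝓘(θ* | ψ^{ps}) = (1/t²) 𝓘(θ* | ψ), so if 𝓘(θ* | ψ) is invertible then for every M×M real matrix W one has Tr[W · 𝓘(θ* | ψ^{ps})⁻¹] = t² · Tr[W · 𝓘(θ* | ψ)⁻¹]. -/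

import Mathlib

/-! The filter `K` fixes `ψ(θ*)^⊥` and multiplies `ψ(θ*)` by `t`, so `p(θ*) = t²` and
`ψ^{ps}(θ*) = ψ(θ*)`. Differentiating `ψ^{ps} = p^{-1/2} K ψ` at `θ*` gives
`∂ᵢψ^{ps} = t⁻¹ ∂ᵢψ + (multiple of ψ(θ*))`, and the QFIM only sees the parts of the derivatives
orthogonal to the state, so it is multiplied by `t⁻²`. -/

noncomputable section

open Matrix

/-- Standard Hermitian inner product on `ℂ^D`, conjugate-linear in the first argument. -/
def dotc {D : ℕ} (x y : Fin D → ℂ) : ℂ := ∑ d, starRingEnd ℂ (x d) * y d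

/-- Partial derivative of a parametrized family with respect to the `i`-th parameter. -/
def pder {M D : ℕ} (i : Fin M) (φ : (Fin M → ℝ) → (Fin D → ℂ)) (θ : Fin M → ℝ) :
    Fin D → ℂ :=
  fderiv ℝ φ θ (Pi.single i 1)

/-- Pure-state quantum Fisher information matrix entry
`𝓘_{ij}(θ|φ) = 4 Re[⟨∂_iφ,∂_jφ⟩ − ⟨∂_iφ,φ⟩⟨φ,∂_jφ⟩]`. -/
def qfim {M D : ℕ} (φ : (Fin M → ℝ) → (Fin D → ℂ)) (θ : Fin M → ℝ) (i j : Fin M) : ℝ :=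
  4 * (dotc (pder i φ θ) (pder j φ θ) -
        dotc (pder i φ θ) (φ θ) * dotc (φ θ) (pder j φ θ)).re

/-- The quantum Fisher information matrix as an `M×M` real matrix. -/
def qfimMatrix {M D : ℕ} (φ : (Fin M → ℝ) → (Fin D → ℂ)) (θ : Fin M → ℝ) :
    Matrix (Fin M) (Fin M) ℝ :=
  Matrix.of fun i j => qfim φ θ i j

section Dotc

variable {D : ℕ}

theorem dotc_eq_star_dotProduct (x y : Fin D → ℂ) : dotc x y = star x ⬝ᵥ y := rfl

theorem dotc_smul_left (a : ℂ) (x y : Fin D → ℂ) : dotc (a • x) y = star a * dotc x y := by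
  simp only [dotc_eq_star_dotProduct, star_smul, smul_dotProduct, smul_eq_mul]

theorem dotc_smul_right (a : ℂ) (x y : Fin D → ℂ) : dotc x (a • y) = a * dotc x y :=
  dotProduct_smul a (star x) y

theorem dotc_mulVec (A : Matrix (Fin D) (Fin D) ℂ) (x y : Fin D → ℂ) :
    dotc x (A *ᵥ y) = dotc (Aᴴ *ᵥ x) y := by
  simp only [dotc_eq_star_dotProduct, dotProduct_mulVec, star_mulVec, conjTranspose_conjTranspose]

theorem re_dotc_conjTranspose_mul_self_mulVec {K : Matrix (Fin D) (Fin D) ℂ} {s : Fin D → ℂ}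
    (hs : dotc s s = 1) {t : ℝ} (hKs : K *ᵥ s = (t : ℂ) • s) :
    (dotc s ((Kᴴ * K) *ᵥ s)).re = t ^ 2 := by
  rw [← mulVec_mulVec, dotc_mulVec, conjTranspose_conjTranspose, hKs, dotc_smul_left,
    dotc_smul_right, hs, Complex.star_def, Complex.conj_ofReal, mul_one, ← Complex.ofReal_mul,
    Complex.ofReal_re, sq]

theorem vecMulVec_star_mulVec (s x : Fin D → ℂ) : vecMulVec s (star s) *ᵥ x = dotc s x • s := by
  rw [vecMulVec_mulVec, op_smul_eq_smul, dotc_eq_star_dotProduct]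

/-- For a unit vector `s`, this is `⟨a, (1 - s s†) b⟩`. -/
def perpDotc (s a b : Fin D → ℂ) : ℂ := dotc a b - dotc a s * dotc s b

theorem perpDotc_add_smul_left {s : Fin D → ℂ} (hs : dotc s s = 1) (α : ℂ) (a b : Fin D → ℂ) :
    perpDotc s (a + α • s) b = perpDotc s a b := by
  simp only [perpDotc, dotc_eq_star_dotProduct, star_add, star_smul, add_dotProduct,
    smul_dotProduct, smul_eq_mul] at hs ⊢
  rw [hs]
  ring

theorem perpDotc_add_smul_right {s : Fin D → ℂ} (hs : dotc s s = 1) (β : ℂ) (a b : Fin D → ℂ) :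
    perpDotc s a (b + β • s) = perpDotc s a b := by
  simp only [perpDotc, dotc_eq_star_dotProduct, dotProduct_add, dotProduct_smul,
    smul_eq_mul] at hs ⊢
  rw [hs]
  ring

theorem perpDotc_smul_smul (s : Fin D → ℂ) (c d : ℂ) (a b : Fin D → ℂ) :
    perpDotc s (c • a) (d • b) = star c * d * perpDotc s a b := by
  simp only [perpDotc, dotc_smul_left, dotc_smul_right]
  ring

end Dotc

theorem qfim_eq_re_perpDotc {M D : ℕ} (φ : (Fin M → ℝ) → (Fin D → ℂ)) (θ : Fin M → ℝ)
    (i j : Fin M) : qfim φ θ i j = 4 * (perpDotc (φ θ) (pder i φ θ) (pder j φ θ)).re := rfl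

theorem qfim_eq_sq_mul_of_pder_eq {M D : ℕ} {φ ψ : (Fin M → ℝ) → (Fin D → ℂ)} {θ : Fin M → ℝ}
    (hunit : dotc (ψ θ) (ψ θ) = 1) (hφψ : φ θ = ψ θ) (c : ℝ)
    (hpder : ∀ i, ∃ α : ℂ, pder i φ θ = (c : ℂ) • pder i ψ θ + α • ψ θ) (i j : Fin M) :
    qfim φ θ i j = c ^ 2 * qfim ψ θ i j := by
  obtain ⟨α, hi⟩ := hpder i
  obtain ⟨β, hj⟩ := hpder j
  rw [qfim_eq_re_perpDotc, qfim_eq_re_perpDotc, hφψ, hi, hj, perpDotc_add_smul_left hunit,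
    perpDotc_add_smul_right hunit, perpDotc_smul_smul, Complex.star_def, Complex.conj_ofReal,
    ← Complex.ofReal_mul, Complex.re_ofReal_mul]
  ring

section RankOneFilter

variable {D : ℕ} {s : Fin D → ℂ}

theorem sub_one_smul_vecMulVec_add_one_mulVec (t : ℂ) (x : Fin D → ℂ) :
    ((t - 1) • vecMulVec s (star s) + 1) *ᵥ x = x + ((t - 1) * dotc s x) • s := by
  rw [add_mulVec, smul_mulVec, one_mulVec, vecMulVec_star_mulVec, smul_smul, add_comm]

theorem sub_one_smul_vecMulVec_add_one_mulVec_self (hs : dotc s s = 1) (t : ℂ) :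
    ((t - 1) • vecMulVec s (star s) + 1) *ᵥ s = t • s := by
  rw [sub_one_smul_vecMulVec_add_one_mulVec, hs]
  module

end RankOneFilter

section Calculus

variable {E : Type*} [NormedAddCommGroup E] [NormedSpace ℝ E] {D : ℕ} {φ χ : E → Fin D → ℂ}
  {θ : E}

theorem HasFDerivAt.const_mulVec {φ' : E →L[ℝ] Fin D → ℂ} (hφ : HasFDerivAt φ φ' θ)
    (A : Matrix (Fin D) (Fin D) ℂ) :
    HasFDerivAt (fun θ => A *ᵥ φ θ)
      ((((mulVecLin A).restrictScalars ℝ).toContinuousLinearMap).comp φ') θ :=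
  ((mulVecLin A).restrictScalars ℝ).toContinuousLinearMap.hasFDerivAt.comp θ hφ

theorem DifferentiableAt.dotc (hφ : DifferentiableAt ℝ φ θ) (hχ : DifferentiableAt ℝ χ θ) :
    DifferentiableAt ℝ (fun θ => dotc (φ θ) (χ θ)) θ := by
  simp only [dotc_eq_star_dotProduct, dotProduct, Pi.star_apply]
  exact DifferentiableAt.fun_sum fun d _ =>
    ((differentiableAt_pi.mp hφ d).star).mul (differentiableAt_pi.mp hχ d)

end Calculus

section Pder

variable {M D : ℕ} {φ : (Fin M → ℝ) → Fin D → ℂ} {θ : Fin M → ℝ}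

theorem pder_mulVec (A : Matrix (Fin D) (Fin D) ℂ) (hφ : DifferentiableAt ℝ φ θ) (i : Fin M) :
    pder i (fun θ => A *ᵥ φ θ) θ = A *ᵥ pder i φ θ := by
  rw [pder, (hφ.hasFDerivAt.const_mulVec A).fderiv]
  rfl

theorem pder_smul {c : (Fin M → ℝ) → ℝ} (hc : DifferentiableAt ℝ c θ)
    (hφ : DifferentiableAt ℝ φ θ) (i : Fin M) :
    pder i (fun θ => c θ • φ θ) θ = c θ • pder i φ θ + fderiv ℝ c θ (Pi.single i 1) • φ θ := by
  rw [pder, fderiv_fun_smul hc hφ]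
  rfl

end Pder

theorem Matrix.trace_mul_inv_smul {n 𝕜 : Type*} [Fintype n] [DecidableEq n] [Field 𝕜]
    (W A : Matrix n n 𝕜) {k : 𝕜} (hk : k ≠ 0) (hA : IsUnit A.det) :
    (W * (k • A)⁻¹).trace = k⁻¹ * (W * A⁻¹).trace := by
  have : Invertible k := invertibleOfNonzero hk
  rw [inv_smul _ _ hA, invOf_eq_inv, Matrix.mul_smul, trace_smul, smul_eq_mul]

theorem distillation_is_lossless_general
    (M D : ℕ) (ψ : (Fin M → ℝ) → (Fin D → ℂ))
    (hψ : Differentiable ℝ ψ)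
    (hunit : ∀ θ, dotc (ψ θ) (ψ θ) = 1)
    (θstar : Fin M → ℝ) (t : ℝ) (ht0 : 0 < t)
    (P : Matrix (Fin D) (Fin D) ℂ)
    (hP : P = vecMulVec (ψ θstar) (star (ψ θstar)))
    (K : Matrix (Fin D) (Fin D) ℂ)
    (hK : K = ((t : ℂ) - 1) • P + 1)
    (F : Matrix (Fin D) (Fin D) ℂ) (hF : F = Kᴴ * K)
    (p : (Fin M → ℝ) → ℝ)
    (hp : ∀ θ, p θ = (dotc (ψ θ) (F.mulVec (ψ θ))).re)
    (ψps : (Fin M → ℝ) → (Fin D → ℂ))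
    (hψps : ∀ θ', ψps θ' = (Real.sqrt (p θ'))⁻¹ • K.mulVec (ψ θ')) :
    (∀ i j, p θstar * qfim ψps θstar i j = qfim ψ θstar i j) ∧
    qfimMatrix ψps θstar = (1 / t ^ 2) • qfimMatrix ψ θstar ∧
    (IsUnit (qfimMatrix ψ θstar).det →
      ∀ W : Matrix (Fin M) (Fin M) ℝ,
        (W * (qfimMatrix ψps θstar)⁻¹).trace = t ^ 2 * (W * (qfimMatrix ψ θstar)⁻¹).trace) := by
  subst hP
  set s := ψ θstar
  have hs : dotc s s = 1 := hunit θstar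
  have hKs : K *ᵥ s = (t : ℂ) • s := hK ▸ sub_one_smul_vecMulVec_add_one_mulVec_self hs t
  have hpt : p θstar = t ^ 2 := by rw [hp, hF, re_dotc_conjTranspose_mul_self_mulVec hs hKs]
  have hsqrt : √(p θstar) = t := by rw [hpt, Real.sqrt_sq ht0.le]
  have hψps_star : ψps θstar = s := by
    rw [hψps, hsqrt, hKs, ← Complex.coe_smul, smul_smul, Complex.ofReal_inv,
      inv_mul_cancel₀ (by exact_mod_cast ht0.ne'), one_smul]
  have hKψ : DifferentiableAt ℝ (fun θ => K *ᵥ ψ θ) θstar :=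
    ((hψ θstar).hasFDerivAt.const_mulVec K).differentiableAt
  have hpd : DifferentiableAt ℝ p θstar := by
    rw [show p = fun θ => Complex.reCLM (dotc (ψ θ) (F *ᵥ ψ θ)) from funext hp]
    exact Complex.reCLM.differentiableAt.comp θstar ((hψ θstar).dotc
      ((hψ θstar).hasFDerivAt.const_mulVec F).differentiableAt)
  have hcd : DifferentiableAt ℝ (fun θ => (√(p θ))⁻¹) θstar :=
    (hpd.sqrt (by rw [hpt]; positivity)).inv (by rw [hsqrt]; exact ht0.ne')
  have hpder : ∀ i, ∃ α : ℂ, pder i ψps θstar = ((t⁻¹ : ℝ) : ℂ) • pder i ψ θstar + α • s := by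
    intro i
    rw [show ψps = fun θ => (√(p θ))⁻¹ • K *ᵥ ψ θ from funext hψps, pder_smul hcd hKψ,
      pder_mulVec K (hψ θstar), hsqrt, hKs, hK, sub_one_smul_vecMulVec_add_one_mulVec]
    exact ⟨(t : ℂ)⁻¹ * ((t - 1) * dotc s (pder i ψ θstar))
      + fderiv ℝ (fun θ => (√(p θ))⁻¹) θstar (Pi.single i 1) * t, by push_cast; module⟩
  have hq := qfim_eq_sq_mul_of_pder_eq hs hψps_star t⁻¹ hpder
  have hqm : qfimMatrix ψps θstar = (1 / t ^ 2) • qfimMatrix ψ θstar := by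
    ext i j
    simp only [qfimMatrix, Matrix.smul_apply, of_apply, hq, smul_eq_mul, inv_pow, one_div]
  refine ⟨fun i j => ?_, hqm, fun hdet W => ?_⟩
  · rw [hq, hpt]
    field_simp
  · rw [hqm, trace_mul_inv_smul W _ (by positivity) hdet, one_div, inv_inv]

/-- **Lossless distillation.** With `K = (t−1)|ψ(θ*)⟩⟨ψ(θ*)| + I`, the postselection
probability times the postselected QFIM equals the original QFIM; as matrices
`𝓘(θ*|ψ^{ps}) = (1/t²) 𝓘(θ*|ψ)`, and hence every scalar Cramér–Rao risk
`Tr[W 𝓘⁻¹]` is reduced by the factor `t²`. -/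
theorem distillation_is_lossless
    (M D : ℕ) (ψ : (Fin M → ℝ) → (Fin D → ℂ))
    (hψ : Differentiable ℝ ψ)
    (hunit : ∀ θ, dotc (ψ θ) (ψ θ) = 1)
    (θstar : Fin M → ℝ) (t : ℝ) (ht0 : 0 < t) (ht1 : t ≤ 1)
    (P : Matrix (Fin D) (Fin D) ℂ)
    (hP : P = vecMulVec (ψ θstar) (star (ψ θstar)))
    (K : Matrix (Fin D) (Fin D) ℂ)
    (hK : K = ((t : ℂ) - 1) • P + 1)
    (F : Matrix (Fin D) (Fin D) ℂ) (hF : F = Kᴴ * K)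
    (p : (Fin M → ℝ) → ℝ)
    (hp : ∀ θ, p θ = (dotc (ψ θ) (F.mulVec (ψ θ))).re)
    (ψps : (Fin M → ℝ) → (Fin D → ℂ))
    (hψps : ∀ θ', ψps θ' = (Real.sqrt (p θ'))⁻¹ • K.mulVec (ψ θ')) :
    (∀ i j, p θstar * qfim ψps θstar i j = qfim ψ θstar i j) ∧
    qfimMatrix ψps θstar = (1 / t ^ 2) • qfimMatrix ψ θstar ∧
    (IsUnit (qfimMatrix ψ θstar).det →
      ∀ W : Matrix (Fin M) (Fin M) ℝ,
        (W * (qfimMatrix ψps θstar)⁻¹).trace = t ^ 2 * (W * (qfimMatrix ψ θstar)⁻¹).trace) :=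
  distillation_is_lossless_general M D ψ hψ hunit θstar t ht0 P hP K hK F hF p hp ψps hψps

end
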